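/- arXiv:0710.2929 — 4 statements merged into one kernel-verified Lean document; each statement's English description precedes it below -/
import Mathlib

section
/- For all integers d ≥ 1, n ≥ 1, and every z, the alternating convolution identity ∑_{i=0}^{d} (-1)^{i+1} · binom(n+i-1, n) · binom(z, d-i) = binom(z-n-1, d-1) holds, where binom denotes the Stirling polynomial. -/
/-!
The term `i = 0` vanishes because `binom(n - 1, n) = 0`. For `i = j + 1`, the reflection formula
`binom(-r, j) = (-1)^j binom(r + j - 1, j)` turns `(-1)^j binom(n + j, n)` into `binom(-n - 1, j)`,
so the sum is the Chu–Vandermonde expansion of `binom((-n - 1) + z, d - 1)`.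
-/

/-- Stirling polynomial `binom(z,n)`. -/
noncomputable def sbinom (z : ℚ) (n : ℕ) : ℚ :=
  (∏ i ∈ Finset.range n, (z - i)) / (n.factorial : ℚ)

open Polynomial Finset

theorem descPochhammer_smeval_eq_prod_range {R : Type*} [CommRing R] (k : ℕ) (r : R) :
    (descPochhammer ℤ k).smeval r = ∏ j ∈ range k, (r - j) := by
  rw [← aeval_eq_smeval, aeval_def, ← eval_map, descPochhammer_map,
    descPochhammer_eval_eq_prod_range]

theorem sbinom_eq_choose (z : ℚ) (k : ℕ) : sbinom z k = Ring.choose z k := by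
  rw [Ring.choose_eq_smul, descPochhammer_smeval_eq_prod_range, sbinom, smul_eq_mul,
    inv_mul_eq_div]

namespace Ring

variable {R : Type*} [Ring R] [BinomialRing R]

theorem choose_neg_natCast_sub_one (n j : ℕ) :
    choose (-(n : R) - 1) j = (-1) ^ j * (n + j).choose n := by
  rw [show -(n : R) - 1 = -((n + 1 : ℕ) : R) by push_cast; abel, choose_neg,
    show ((n + 1 : ℕ) : R) + j - 1 = ((n + j : ℕ) : R) by push_cast; abel, choose_natCast,
    Units.smul_def, Int.coe_negOnePow_natCast, zsmul_eq_mul, Nat.choose_symm_add]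
  norm_cast

theorem choose_natCast_sub_one_self {n : ℕ} (hn : 1 ≤ n) :
    choose ((n : R) - 1) n = 0 := by
  rw [← Nat.cast_pred hn, choose_natCast, Nat.choose_eq_zero_of_lt (Nat.sub_lt hn one_pos),
    Nat.cast_zero]

theorem add_choose_eq_sum_range {r s : R} (h : Commute r s) (k : ℕ) :
    choose (r + s) k = ∑ j ∈ range (k + 1), choose r j * choose s (k - j) := by
  rw [add_choose_eq k h, Nat.sum_antidiagonal_eq_sum_range_succ_mk]

end Ring

theorem stirling_alternating_convolution (d n : ℕ) (hd : 1 ≤ d) (hn : 1 ≤ n) (z : ℚ) :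
    ∑ i ∈ Finset.range (d + 1),
      (-1 : ℚ) ^ (i + 1) * sbinom ((n : ℚ) + i - 1) n * sbinom z (d - i)
      = sbinom (z - n - 1) (d - 1) := by
  obtain ⟨m, rfl⟩ : ∃ m, d = m + 1 := ⟨d - 1, by omega⟩
  simp only [sbinom_eq_choose]
  rw [sum_range_succ', Nat.cast_zero, add_zero, Ring.choose_natCast_sub_one_self hn,
    mul_zero, zero_mul, add_zero, Nat.add_sub_cancel,
    show z - n - 1 = (-(n : ℚ) - 1) + z by ring, Ring.add_choose_eq_sum_range (Commute.all _ _)]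
  refine sum_congr rfl fun j _ => ?_
  rw [Ring.choose_neg_natCast_sub_one,
    show (n : ℚ) + (j + 1 : ℕ) - 1 = (n + j : ℕ) by push_cast; ring,
    Ring.choose_natCast, Nat.add_sub_add_right]
  ring
end

section
/- For every integer N ≥ 1 and complex q with |q| < 1, one has ∏_{n=1}^{N-1} (1 - q^n)^{N-n} = (q;q)_∞^N · (q^{N+1}; q)_∞^{(2)} / (q;q)_∞^{(2)}, where (a;q)_∞ := ∏_{i=0}^∞ (1 - a q^i) and (a;q)_∞^{(2)} := ∏_{i,j=0}^∞ (1 - a q^{i+j}). -/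
/-- The q-shifted factorial `(a;q)_∞ = ∏_{i≥0} (1 - a qⁱ)`. -/
noncomputable def qfac (a q : ℂ) : ℂ := ∏' i : ℕ, (1 - a * q ^ i)

/-- The q-bifactorial `(a;q)_∞^{(2)} = ∏_{i,j≥0} (1 - a q^{i+j})`. -/
noncomputable def qbifac (a q : ℂ) : ℂ := ∏' p : ℕ × ℕ, (1 - a * q ^ (p.1 + p.2))

/-!
Splitting the double product by rows gives `(a;q)_∞^{(2)} = ∏_{i ≥ 0} (a qⁱ;q)_∞`. Peeling off the
first `N` rows at `a = q` gives `(q;q)_∞^{(2)} = ∏_{i<N} (q^{i+1};q)_∞ · (q^{N+1};q)_∞^{(2)}`, while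
`(q;q)_∞ = ∏_{n=1}^{i} (1 - qⁿ) · (q^{i+1};q)_∞` for each `i`. Multiplying the latter over `i < N`
writes `(q;q)_∞^N` as the left-hand side times the same `∏_{i<N} (q^{i+1};q)_∞`, which cancels
because `(q;q)_∞^{(2)} ≠ 0` for `|q| < 1`.
-/

open Finset

section OneSub

variable {ι R : Type*} [NormedCommRing R] [NormOneClass R] [CompleteSpace R] {g : ι → R}

lemma multipliable_one_sub_of_summable (hg : Summable (‖g ·‖)) :
    Multipliable fun i ↦ 1 - g i := by
  simpa only [sub_eq_add_neg] using
    multipliable_one_add_of_summable (f := fun i ↦ -g i) (by simpa only [norm_neg] using hg)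

lemma tprod_one_sub_ne_zero_of_summable [NormMulClass R] (h : ∀ i, 1 - g i ≠ 0)
    (hg : Summable (‖g ·‖)) : ∏' i, (1 - g i) ≠ 0 := by
  simpa only [sub_eq_add_neg] using
    tprod_one_add_ne_zero_of_summable (f := fun i ↦ -g i) (by simpa only [sub_eq_add_neg] using h)
      (by simpa only [norm_neg] using hg)

end OneSub

lemma eq_prod_range_mul_of_hasProd_mul_pow {R M : Type*} [Monoid R] [CommMonoid M]
    [TopologicalSpace M] [T2Space M] [ContinuousMul M] {F G : R → M} {q : R}
    (h : ∀ a, HasProd (fun i ↦ F (a * q ^ i)) (G a)) (a : R) (k : ℕ) :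
    G a = (∏ i ∈ range k, F (a * q ^ i)) * G (a * q ^ k) := by
  have hk : HasProd (fun i ↦ F (a * q ^ (i + k))) (G (a * q ^ k)) := by
    simpa only [mul_assoc, ← pow_add, add_comm k] using h (a * q ^ k)
  exact (h a).unique hk.prod_range_mul

section QPochhammer

variable {q : ℂ}

lemma summable_norm_mul_pow (a : ℂ) (hq : ‖q‖ < 1) : Summable fun i : ℕ ↦ ‖a * q ^ i‖ := by
  simpa only [norm_mul, norm_pow] using
    (summable_geometric_of_lt_one (norm_nonneg q) hq).mul_left ‖a‖

lemma summable_norm_mul_pow_add (a : ℂ) (hq : ‖q‖ < 1) :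
    Summable fun p : ℕ × ℕ ↦ ‖a * q ^ (p.1 + p.2)‖ := by
  have hgeom := summable_geometric_of_lt_one (norm_nonneg q) hq
  simpa only [norm_mul, norm_pow, pow_add] using
    ((hgeom.mul_of_nonneg hgeom (fun _ ↦ by positivity) fun _ ↦ by positivity).mul_left ‖a‖)

lemma hasProd_qfac (a : ℂ) (hq : ‖q‖ < 1) : HasProd (fun i ↦ 1 - a * q ^ i) (qfac a q) :=
  (multipliable_one_sub_of_summable (summable_norm_mul_pow a hq)).hasProd

lemma hasProd_qbifac (a : ℂ) (hq : ‖q‖ < 1) :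
    HasProd (fun p : ℕ × ℕ ↦ 1 - a * q ^ (p.1 + p.2)) (qbifac a q) :=
  (multipliable_one_sub_of_summable (summable_norm_mul_pow_add a hq)).hasProd

lemma hasProd_qfac_mul_pow (a : ℂ) (hq : ‖q‖ < 1) :
    HasProd (fun i ↦ qfac (a * q ^ i) q) (qbifac a q) := by
  refine (hasProd_qbifac a hq).prod_fiberwise fun i ↦ ?_
  simpa only [pow_add, mul_assoc] using hasProd_qfac (a * q ^ i) hq

lemma norm_mul_pow_lt_one {a : ℂ} (ha : ‖a‖ < 1) (hq : ‖q‖ ≤ 1) (k : ℕ) : ‖a * q ^ k‖ < 1 := by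
  rw [norm_mul, norm_pow]
  exact mul_lt_one_of_nonneg_of_lt_one_left (norm_nonneg a) ha (pow_le_one₀ (norm_nonneg q) hq)

lemma qbifac_ne_zero {a : ℂ} (ha : ‖a‖ < 1) (hq : ‖q‖ < 1) : qbifac a q ≠ 0 := by
  refine tprod_one_sub_ne_zero_of_summable (fun p ↦ sub_ne_zero.mpr ?_)
    (summable_norm_mul_pow_add a hq)
  exact fun h ↦ (norm_mul_pow_lt_one ha hq.le (p.1 + p.2)).ne (by rw [← h, norm_one])

end QPochhammer

lemma prod_range_prod_Icc_eq_prod_pow {M : Type*} [CommMonoid M] (f : ℕ → M) (N : ℕ) :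
    ∏ i ∈ range N, ∏ n ∈ Icc 1 i, f n = ∏ n ∈ Icc 1 (N - 1), f n ^ (N - n) := by
  rw [prod_comm' (t' := Icc 1 (N - 1)) (s' := fun n ↦ Ico n N)]
  · simp only [prod_const, Nat.card_Ico]
  · intro i n
    simp only [mem_range, mem_Icc, mem_Ico]
    omega

lemma prod_range_one_sub_mul_pow (q : ℂ) (k : ℕ) :
    ∏ i ∈ range k, (1 - q * q ^ i) = ∏ n ∈ Icc 1 k, (1 - q ^ n) := by
  rw [← Ico_add_one_right_eq_Icc, prod_Ico_eq_prod_range]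
  simp [pow_succ', add_comm]

theorem finite_product_as_ratio_general (N : ℕ) (q : ℂ) (hq : ‖q‖ < 1) :
    ∏ n ∈ Finset.Icc 1 (N - 1), (1 - q ^ n) ^ (N - n)
    = qfac q q ^ N * qbifac (q ^ (N + 1)) q / qbifac q q := by
  have hrows := eq_prod_range_mul_of_hasProd_mul_pow (F := (qfac · q))
    (fun a ↦ hasProd_qfac_mul_pow a hq) q N
  rw [eq_div_iff (qbifac_ne_zero hq hq), hrows, ← pow_succ', ← mul_assoc]
  congr 1
  calc (∏ n ∈ Icc 1 (N - 1), (1 - q ^ n) ^ (N - n)) * ∏ i ∈ range N, qfac (q * q ^ i) q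
      = ∏ i ∈ range N, ((∏ n ∈ range i, (1 - q * q ^ n)) * qfac (q * q ^ i) q) := by
        simp only [prod_range_one_sub_mul_pow, prod_mul_distrib, prod_range_prod_Icc_eq_prod_pow]
    _ = ∏ _i ∈ range N, qfac q q := prod_congr rfl fun i _ ↦
        (eq_prod_range_mul_of_hasProd_mul_pow (F := (1 - ·)) (fun a ↦ hasProd_qfac a hq) q i).symm
    _ = qfac q q ^ N := by rw [prod_const, card_range]

theorem finite_product_as_ratio (N : ℕ) (hN : 1 ≤ N) (q : ℂ) (hq : ‖q‖ < 1) :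
    ∏ n ∈ Finset.Icc 1 (N - 1), (1 - q ^ n) ^ (N - n)
    = qfac q q ^ N * qbifac (q ^ (N + 1)) q / qbifac q q :=
  finite_product_as_ratio_general N q hq
end

section
/- For real x > 0, the logarithm of the MacMahon function satisfies ln M(e^{-x}) = ∑_{k=1}^∞ (1/(4k)) csch²(kx/2), where M(q) := ∏_{n=1}^∞ (1-q^n)^{-n} and csch(z) = 1/sinh(z). -/
/-!
Expanding each logarithm, `log M(q) = ∑_{n ≥ 1} n · (-log (1 - qⁿ)) = ∑_{n, m ≥ 1} n q^{nm} / m`.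
This double series converges absolutely for `|q| < 1`, so it may be summed over `n` first instead;
`∑_n n (q^m)ⁿ = q^m / (1 - q^m)²` turns it into the Lambert-type series `∑_m q^m / (m (1 - q^m)²)`,
and at `q = e^{-x}` each term is `csch²(mx/2) / (4m)`.
-/

open Real

lemma hasSum_succ_mul_pow_succ {𝕜 : Type*} [NormedDivisionRing 𝕜] {r : 𝕜} (hr : ‖r‖ < 1) :
    HasSum (fun n : ℕ => ((n : 𝕜) + 1) * r ^ (n + 1)) (r / (1 - r) ^ 2) := by
  have h := (hasSum_nat_add_iff' (f := fun n : ℕ => (n : 𝕜) * r ^ n) 1).mpr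
    (hasSum_coe_mul_geometric_of_norm_lt_one hr)
  simpa using h

lemma exp_neg_two_mul_div_one_sub_sq (u : ℝ) :
    exp (-(2 * u)) / (1 - exp (-(2 * u))) ^ 2 = (1 / sinh u) ^ 2 / 4 := by
  have hsq : exp (-(2 * u)) = exp (-u) ^ 2 := by rw [← exp_nat_mul]; ring_nf
  have hfactor : 1 - exp (-(2 * u)) = exp (-u) * (exp u - exp (-u)) := by
    rw [hsq, mul_sub, ← exp_add, neg_add_cancel, exp_zero, sq]
  rw [hfactor, hsq, mul_pow, div_mul_cancel_left₀ (pow_ne_zero 2 (exp_pos _).ne'), sinh_eq]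
  field_simp
  ring

lemma abs_pow_succ_lt_one {q : ℝ} (hq : |q| < 1) (n : ℕ) : |q ^ (n + 1)| < 1 := by
  rw [abs_pow]; exact pow_lt_one₀ (abs_nonneg q) hq n.succ_ne_zero

/-- `n q^{nm} / m`, with the pair `(n, m)` of positive integers stored as `(n - 1, m - 1)`. -/
noncomputable def macmahonLogTerm (q : ℝ) (p : ℕ × ℕ) : ℝ :=
  ((p.1 : ℝ) + 1) * q ^ ((p.1 + 1) * (p.2 + 1)) / ((p.2 : ℝ) + 1)

namespace macmahonLogTerm

variable {q : ℝ}

lemma hasSum_right (hq : |q| < 1) (n : ℕ) :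
    HasSum (fun m => macmahonLogTerm q (n, m)) (((n : ℝ) + 1) * -log (1 - q ^ (n + 1))) := by
  refine ((hasSum_pow_div_log_of_abs_lt_one (abs_pow_succ_lt_one hq n)).mul_left
    ((n : ℝ) + 1)).congr_fun fun m => ?_
  simp only [macmahonLogTerm, pow_mul]
  ring

lemma hasSum_left (hq : |q| < 1) (m : ℕ) :
    HasSum (fun n => macmahonLogTerm q (n, m))
      (q ^ (m + 1) / (1 - q ^ (m + 1)) ^ 2 / ((m : ℝ) + 1)) := by
  refine ((hasSum_succ_mul_pow_succ (abs_pow_succ_lt_one hq m)).div_const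
    ((m : ℝ) + 1)).congr_fun fun n => ?_
  simp only [macmahonLogTerm, ← pow_mul, mul_comm (n + 1) (m + 1)]

lemma norm_le (hq : |q| < 1) (p : ℕ × ℕ) :
    ‖macmahonLogTerm q p‖ ≤ ((p.1 : ℝ) + 1) * |q| ^ (p.1 + 1) * |q| ^ p.2 := by
  obtain ⟨n, m⟩ := p
  have hpow : |q| ^ ((n + 1) * (m + 1)) ≤ |q| ^ (m + (n + 1)) :=
    pow_le_pow_of_le_one (abs_nonneg q) hq.le (by nlinarith)
  have hm : (1 : ℝ) ≤ (m : ℝ) + 1 := by simp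
  have hn : |(n : ℝ) + 1| = (n : ℝ) + 1 := abs_of_pos (by positivity)
  simp only [macmahonLogTerm, Real.norm_eq_abs, abs_div, abs_mul, abs_pow, hn,
    abs_of_pos (zero_lt_one.trans_le hm)]
  rw [div_le_iff₀ (by positivity)]
  calc ((n : ℝ) + 1) * |q| ^ ((n + 1) * (m + 1))
      ≤ ((n : ℝ) + 1) * |q| ^ (n + 1) * |q| ^ m := by
        rw [mul_assoc, ← pow_add, add_comm (n + 1)]
        exact mul_le_mul_of_nonneg_left hpow (by positivity)
    _ ≤ ((n : ℝ) + 1) * |q| ^ (n + 1) * |q| ^ m * ((m : ℝ) + 1) :=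
        le_mul_of_one_le_right (by positivity) hm

lemma summable (hq : |q| < 1) : Summable (macmahonLogTerm q) := by
  have hq' : ‖|q|‖ < 1 := by rwa [Real.norm_eq_abs, abs_abs]
  refine Summable.of_norm_bounded ?_ (norm_le hq)
  exact (hasSum_succ_mul_pow_succ hq').summable.mul_of_nonneg
    (summable_geometric_of_lt_one (abs_nonneg q) hq) (fun _ => by positivity) (fun _ => by positivity)

end macmahonLogTerm

open macmahonLogTerm in
lemma hasSum_log_one_sub_pow_zpow {q : ℝ} (hq : |q| < 1) :
    HasSum (fun n : ℕ => log ((1 - q ^ (n + 1)) ^ (-((n : ℤ) + 1))))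
      (∑' m : ℕ, q ^ (m + 1) / (1 - q ^ (m + 1)) ^ 2 / ((m : ℝ) + 1)) := by
  obtain ⟨a, ha⟩ := summable hq
  have hcols : HasSum (fun m : ℕ => q ^ (m + 1) / (1 - q ^ (m + 1)) ^ 2 / ((m : ℝ) + 1)) a :=
    ((Equiv.prodComm ℕ ℕ).hasSum_iff.mpr ha).prod_fiberwise (hasSum_left hq)
  rw [hcols.tsum_eq]
  convert ha.prod_fiberwise (hasSum_right hq) using 2 with n
  rw [log_zpow]
  push_cast
  ring

lemma hasProd_one_sub_pow_zpow {q : ℝ} (hq : |q| < 1) :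
    HasProd (fun n : ℕ => (1 - q ^ (n + 1)) ^ (-((n : ℤ) + 1)))
      (exp (∑' m : ℕ, q ^ (m + 1) / (1 - q ^ (m + 1)) ^ 2 / ((m : ℝ) + 1))) := by
  convert (hasSum_log_one_sub_pow_zpow hq).rexp using 2 with n
  have hpos : 0 < 1 - q ^ (n + 1) := by
    linarith [le_abs_self (q ^ (n + 1)), abs_pow_succ_lt_one hq n]
  exact (exp_log (zpow_pos hpos _)).symm

/-- `ln M(e^{-x}) = ∑_{k≥1} csch²(kx/2)/(4k)` for `x > 0`, where
`M(q) = ∏_{n≥1}(1-qⁿ)^{-n}` is the MacMahon function. -/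
theorem log_macmahon_csch_sum (x : ℝ) (hx : 0 < x) :
    Real.log (∏' n : ℕ, (1 - Real.exp (-((n : ℝ) + 1) * x)) ^ (-((n : ℤ) + 1)))
    = ∑' k : ℕ, (1 / Real.sinh (((k : ℝ) + 1) * x / 2)) ^ 2 / (4 * ((k : ℝ) + 1)) := by
  have hexp : ∀ k : ℕ, exp (-((k : ℝ) + 1) * x) = exp (-x) ^ (k + 1) := fun k => by
    rw [← exp_nat_mul]; push_cast; ring_nf
  have hq : |exp (-x)| < 1 := by rw [abs_of_pos (exp_pos _), exp_lt_one_iff]; linarith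
  simp only [hexp, (hasProd_one_sub_pow_zpow hq).tprod_eq, log_exp]
  refine tsum_congr fun k => ?_
  rw [← hexp, ← div_div, ← exp_neg_two_mul_div_one_sub_sq]
  ring_nf
end

section
/- The Mellin transform of ln M(e^{-x}) equals Γ(s) ζ(s-1) ζ(s+1) for Re s > 2; that is, ∫_0^∞ x^{s-1} ln M(e^{-x}) dx = Γ(s) ζ(s-1) ζ(s+1), where M(q) = ∏_{n≥1}(1-q^n)^{-n}. -/
/-!
Expanding `-log (1 - y) = ∑ₖ yᵏ / k` in every factor gives
`log M(q) = ∑_{n,k ≥ 1} (n / k) q^{nk}`, so `log M(e^{-x})` is the exponential series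
`∑ (n / k) e^{-nkx}`. Its Mellin transform may be taken termwise, the term `(n, k)` contributing
`Γ(s) (n / k) (nk)^{-s} = Γ(s) n^{1-s} k^{-1-s}`; for `Re s > 2` this double series converges
absolutely, which justifies the interchange, and it factors as `Γ(s) ζ(s - 1) ζ(s + 1)`.
-/

open Real Set Complex

noncomputable def macmahon (q : ℝ) : ℝ := ∏' n : ℕ, (1 - q ^ (n + 1)) ^ (-((n : ℤ) + 1))

lemma macmahon_exp_neg (x : ℝ) :
    macmahon (rexp (-x)) = ∏' n : ℕ, (1 - rexp (-((n : ℝ) + 1) * x)) ^ (-((n : ℤ) + 1)) := by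
  refine tprod_congr fun n ↦ ?_
  rw [← Real.exp_nat_mul]
  push_cast
  ring_nf

lemma summable_succ_div_succ_mul_pow_succ_mul_succ {r : ℝ} (hr : |r| < 1) :
    Summable fun q : ℕ × ℕ ↦ ((q.1 : ℝ) + 1) / ((q.2 : ℝ) + 1) * r ^ ((q.1 + 1) * (q.2 + 1)) := by
  have hrow : Summable fun n : ℕ ↦ ((n : ℝ) + 1) * |r| ^ (n + 1) := by
    have h : Summable fun n : ℕ ↦ (n : ℝ) ^ 1 * |r| ^ n :=
      summable_pow_mul_geometric_of_norm_lt_one 1 (by rwa [norm_abs_eq_norm])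
    exact ((summable_nat_add_iff 1).2 h).congr fun n ↦ by push_cast; ring
  -- `(n + 1) (k + 1) ≥ (n + 1) + k` dominates the series by `∑ (n + 1) |r|^(n + 1) · ∑ |r|^k`
  refine Summable.of_norm_bounded
    (hrow.mul_of_nonneg (summable_geometric_of_lt_one (abs_nonneg r) hr)
      (fun n ↦ by positivity) (fun k ↦ by positivity)) fun ⟨n, k⟩ ↦ ?_
  have hexp : n + 1 + k ≤ (n + 1) * (k + 1) := by nlinarith
  calc ‖((n : ℝ) + 1) / ((k : ℝ) + 1) * r ^ ((n + 1) * (k + 1))‖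
      = ((n : ℝ) + 1) / ((k : ℝ) + 1) * |r| ^ ((n + 1) * (k + 1)) := by
        rw [norm_mul, norm_pow, Real.norm_eq_abs, Real.norm_eq_abs,
          abs_of_nonneg (by positivity)]
    _ ≤ ((n : ℝ) + 1) * |r| ^ (n + 1 + k) := by
        gcongr ?_ * ?_
        · exact div_le_self (by positivity) (by simp)
        · exact pow_le_pow_of_le_one (abs_nonneg r) hr.le hexp
    _ = ((n : ℝ) + 1) * |r| ^ (n + 1) * |r| ^ k := by ring

lemma hasSum_log_macmahon {r : ℝ} (hr : |r| < 1) :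
    HasSum (fun q : ℕ × ℕ ↦ ((q.1 : ℝ) + 1) / ((q.2 : ℝ) + 1) * r ^ ((q.1 + 1) * (q.2 + 1)))
      (Real.log (macmahon r)) := by
  have hpow : ∀ n : ℕ, |r ^ (n + 1)| < 1 := fun n ↦ by
    rw [abs_pow]
    exact pow_lt_one₀ (abs_nonneg r) hr n.succ_ne_zero
  have hfactor_pos : ∀ n : ℕ, 0 < (1 - r ^ (n + 1)) ^ (-((n : ℤ) + 1)) := fun n ↦
    zpow_pos (by linarith [(abs_lt.1 (hpow n)).2]) _
  have hrow : ∀ n : ℕ, HasSum (fun k : ℕ ↦ ((n : ℝ) + 1) / ((k : ℝ) + 1) * r ^ ((n + 1) * (k + 1)))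
      (Real.log ((1 - r ^ (n + 1)) ^ (-((n : ℤ) + 1)))) := fun n ↦ by
    have hval : ((-((n : ℤ) + 1) : ℤ) : ℝ) * Real.log (1 - r ^ (n + 1)) =
        ((n : ℝ) + 1) * -Real.log (1 - r ^ (n + 1)) := by push_cast; ring
    rw [Real.log_zpow, hval]
    refine ((hasSum_pow_div_log_of_abs_lt_one (hpow n)).mul_left ((n : ℝ) + 1)).congr_fun
      fun k ↦ ?_
    rw [pow_mul]
    ring
  have hsum := (summable_succ_div_succ_mul_pow_succ_mul_succ hr).hasSum
  rw [macmahon, (hasProd_of_hasSum_log hfactor_pos (hsum.prod_fiberwise hrow)).tprod_eq,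
    Real.log_exp]
  exact hsum

lemma summable_norm_one_div_nat_add_one_cpow {s : ℂ} (hs : 1 < s.re) :
    Summable fun n : ℕ ↦ ‖1 / ((n : ℂ) + 1) ^ s‖ := by
  have h : Summable fun n : ℕ ↦ 1 / (n : ℂ) ^ s := Complex.summable_one_div_nat_cpow.2 hs
  exact summable_norm_iff.2 (((summable_nat_add_iff 1).2 h).congr fun n ↦ by push_cast; rfl)

lemma hasSum_one_div_nat_add_one_cpow {s : ℂ} (hs : 1 < s.re) :
    HasSum (fun n : ℕ ↦ 1 / ((n : ℂ) + 1) ^ s) (riemannZeta s) := by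
  rw [zeta_eq_tsum_one_div_nat_add_one_cpow hs]
  exact (summable_norm_one_div_nat_add_one_cpow hs).of_norm.hasSum

lemma hasSum_riemannZeta_mul_riemannZeta {u v : ℂ} (hu : 1 < u.re) (hv : 1 < v.re) :
    HasSum (fun q : ℕ × ℕ ↦ 1 / ((q.1 : ℂ) + 1) ^ u * (1 / ((q.2 : ℂ) + 1) ^ v))
      (riemannZeta u * riemannZeta v) := by
  have hprod : Summable fun q : ℕ × ℕ ↦ 1 / ((q.1 : ℂ) + 1) ^ u * (1 / ((q.2 : ℂ) + 1) ^ v) :=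
    summable_mul_of_summable_norm (f := fun n : ℕ ↦ 1 / ((n : ℂ) + 1) ^ u)
      (g := fun n : ℕ ↦ 1 / ((n : ℂ) + 1) ^ v) (summable_norm_one_div_nat_add_one_cpow hu)
      (summable_norm_one_div_nat_add_one_cpow hv)
  exact HasSum.mul (f := fun n : ℕ ↦ 1 / ((n : ℂ) + 1) ^ u)
    (g := fun n : ℕ ↦ 1 / ((n : ℂ) + 1) ^ v) (hasSum_one_div_nat_add_one_cpow hu)
    (hasSum_one_div_nat_add_one_cpow hv) hprod

lemma succ_div_succ_div_cpow (n k : ℕ) (s : ℂ) :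
    ((n : ℂ) + 1) / ((k : ℂ) + 1) / ((((n : ℝ) + 1) * ((k : ℝ) + 1) : ℝ) : ℂ) ^ s =
      1 / ((n : ℂ) + 1) ^ (s - 1) * (1 / ((k : ℂ) + 1) ^ (s + 1)) := by
  have hn : ((n : ℂ) + 1) ≠ 0 := by exact_mod_cast n.succ_ne_zero
  have hk : ((k : ℂ) + 1) ≠ 0 := by exact_mod_cast k.succ_ne_zero
  have hns : ((n : ℂ) + 1) ^ s ≠ 0 := by simp [cpow_eq_zero_iff, hn]
  have hks : ((k : ℂ) + 1) ^ s ≠ 0 := by simp [cpow_eq_zero_iff, hk]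
  rw [ofReal_mul, mul_cpow_ofReal_nonneg (by positivity) (by positivity)]
  push_cast
  rw [cpow_sub _ _ hn, cpow_add _ _ hk, cpow_one, cpow_one]
  field_simp

lemma mellin_log_macmahon_exp_neg {s : ℂ} (hs : 2 < s.re) :
    mellin (fun t : ℝ ↦ (Real.log (macmahon (rexp (-t))) : ℂ)) s =
      Gamma s * riemannZeta (s - 1) * riemannZeta (s + 1) := by
  set a : ℕ × ℕ → ℂ := fun q ↦ ((q.1 : ℂ) + 1) / ((q.2 : ℂ) + 1)
  set p : ℕ × ℕ → ℝ := fun q ↦ ((q.1 : ℝ) + 1) * ((q.2 : ℝ) + 1)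
  have hs₁ : 1 < (s - 1).re := by simp only [sub_re, one_re]; linarith
  have hs₂ : 1 < (s + 1).re := by simp only [add_re, one_re]; linarith
  have hterm : ∀ q, a q / (p q : ℂ) ^ s =
      1 / ((q.1 : ℂ) + 1) ^ (s - 1) * (1 / ((q.2 : ℂ) + 1) ^ (s + 1)) := fun q ↦
    succ_div_succ_div_cpow q.1 q.2 s
  have hF : ∀ t ∈ Ioi (0 : ℝ),
      HasSum (fun q ↦ a q * rexp (-p q * t)) (Real.log (macmahon (rexp (-t))) : ℂ) := by
    intro t ht
    have hr : |rexp (-t)| < 1 := by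
      rw [abs_of_pos (exp_pos _)]
      exact exp_lt_one_iff.2 (neg_lt_zero.2 ht)
    refine (hasSum_ofReal.2 (hasSum_log_macmahon hr)).congr_fun fun q ↦ ?_
    simp only [a, p, ← Real.exp_nat_mul]
    push_cast
    ring_nf
  have h_sum : Summable fun q ↦ ‖a q‖ / p q ^ s.re :=
    (summable_norm_one_div_nat_add_one_cpow hs₁).mul_norm
      (summable_norm_one_div_nat_add_one_cpow hs₂) |>.congr fun q ↦ by
        rw [← hterm, norm_div, norm_cpow_eq_rpow_re_of_pos (by positivity)]
  have hmellin := hasSum_mellin (fun q ↦ Or.inr (by positivity)) (by linarith) hF h_sum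
  have hzeta := (hasSum_riemannZeta_mul_riemannZeta hs₁ hs₂).mul_left (Gamma s)
  rw [mul_assoc, hmellin.unique (hzeta.congr_fun fun q ↦ by rw [mul_div_assoc, hterm])]

/-- The Mellin transform of `ln M(e^{-x})` is `Γ(s)ζ(s-1)ζ(s+1)` for `Re s > 2`,
where `M(q) = ∏_{n≥1}(1-qⁿ)^{-n}` is the MacMahon function. -/
theorem mellin_log_macmahon (s : ℂ) (hs : 2 < s.re) :
    ∫ x in Set.Ioi (0 : ℝ), (x : ℂ) ^ (s - 1) *
        ((Real.log (∏' n : ℕ, (1 - Real.exp (-((n : ℝ) + 1) * x)) ^ (-((n : ℤ) + 1))) : ℝ) : ℂ)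
      = Complex.Gamma s * riemannZeta (s - 1) * riemannZeta (s + 1) := by
  simpa only [mellin, smul_eq_mul, macmahon_exp_neg] using mellin_log_macmahon_exp_neg hs
end
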